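/- For every integer m ≥ 3 and every m-gon v ∈ ℂ^m, Z(v) = m · ∑_{p=0}^{m−1} ∑_{q=0}^{m−1} ξ_p · conj(ξ_q) · ξ_{q−p} · Im(ω^p + ω^q), where the index q − p is taken modulo m. -/

import Mathlib

open Complex

noncomputable section

/-- `ω = exp(2πi/m)`, a primitive m-th root of unity. -/
def ωc (m : ℕ) : ℂ := Complex.exp (2 * Real.pi * Complex.I / m)

/-- Fourier coefficients of an m-gon: `ξ_j = (1/m) ∑_k v_k ω^{-jk}`. -/
def ξg {m : ℕ} (v : Fin m → ℂ) (j : Fin m) : ℂ :=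
  (1 / m) * ∑ k : Fin m, v k * ωc m ^ (-((j : ℤ) * (k : ℤ)))

/-- The quantity `Z(v) = ∑ (v_k + v_{k+1})·Im(conj(v_k)·v_{k+1})` for an m-gon. -/
def Zg {m : ℕ} [NeZero m] (v : Fin m → ℂ) : ℂ :=
  ∑ k : Fin m, (v k + v (k + 1)) * (((starRingEnd ℂ) (v k) * v (k + 1)).im : ℂ)

set_option linter.unusedSectionVars false
set_option linter.unusedTactic false

variable {m : ℕ} [NeZero m]

lemma omega_ne_zero : ωc m ≠ 0 := Complex.exp_ne_zero _

lemma omega_prim (hm : m ≠ 0) : IsPrimitiveRoot (ωc m) m := by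
  have := Complex.isPrimitiveRoot_exp m hm
  unfold ωc
  convert this using 2

lemma omega_pow_m : ωc m ^ (m:ℤ) = 1 := by
  rw [zpow_natCast, (omega_prim (NeZero.ne m)).pow_eq_one]

lemma omega_zpow_congr {a b : ℤ} (h : (m:ℤ) ∣ (a - b)) : ωc m ^ a = ωc m ^ b := by
  obtain ⟨k, hk⟩ := h
  have : a = b + (m:ℤ) * k := by linarith
  rw [this, zpow_add₀ omega_ne_zero, zpow_mul, omega_pow_m, one_zpow, mul_one]

lemma conj_omega_zpow (a : ℤ) : (starRingEnd ℂ) (ωc m ^ a) = ωc m ^ (-a) := by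
  have hc : (starRingEnd ℂ) (ωc m) = (ωc m)⁻¹ := by
    unfold ωc
    rw [← Complex.exp_conj, ← Complex.exp_neg]
    congr 1
    rw [map_div₀, map_mul, map_mul, Complex.conj_I, Complex.conj_ofReal, map_ofNat, map_natCast]
    ring
  rw [map_zpow₀, hc, inv_zpow, ← zpow_neg]

lemma omega_orth (d : ℤ) :
    ∑ k : Fin m, ωc m ^ ((k:ℤ) * d) = if (m:ℤ) ∣ d then (m:ℂ) else 0 := by
  split_ifs with h
  · have : ∀ k : Fin m, ωc m ^ ((k:ℤ) * d) = 1 := by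
      intro k
      have : (m:ℤ) ∣ ((k:ℤ) * d - 0) := by
        rw [sub_zero]; exact Dvd.dvd.mul_left h _
      rw [omega_zpow_congr this, zpow_zero]
    simp [this]
  · have hζ : ωc m ^ d ≠ 1 := by
      intro hd
      exact h (((omega_prim (NeZero.ne m)).zpow_eq_one_iff_dvd d).mp hd)
    have hgeom : ∑ k ∈ Finset.range m, (ωc m ^ d) ^ k = 0 := by
      rw [geom_sum_eq hζ]
      have : (ωc m ^ d) ^ m = 1 := by
        rw [← zpow_natCast, ← zpow_mul, mul_comm, zpow_mul, omega_pow_m, one_zpow]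
      rw [this, sub_self, zero_div]
    rw [← hgeom, ← Fin.sum_univ_eq_sum_range (fun k => (ωc m ^ d) ^ k)]
    congr 1; ext k
    rw [← zpow_natCast (ωc m ^ d), ← zpow_mul, mul_comm]

lemma fin_dvd_iff (x y : Fin m) : (m:ℤ) ∣ ((x:ℤ) - y) ↔ x = y := by
  constructor
  · intro h
    have hx := x.isLt; have hy := y.isLt
    have h0 : ((x:ℤ) - y) = 0 := by
      refine Int.eq_zero_of_dvd_of_natAbs_lt_natAbs h ?_
      omega
    have : (x:ℤ) = y := by linarith
    exact Fin.ext (by exact_mod_cast this)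
  · rintro rfl; simp

lemma fin_coe_add (x y : Fin m) : (m:ℤ) ∣ (((x:ℤ)+(y:ℤ)) - ((x+y : Fin m):ℤ)) := by
  have : ((x+y : Fin m) : ℕ) = ((x:ℕ) + y) % m := Fin.add_def x y ▸ rfl
  have h2 : ((x+y : Fin m) : ℤ) = ((x:ℤ) + y) % m := by rw [this]; push_cast; ring
  rw [h2]
  exact Int.dvd_self_sub_of_emod_eq rfl

lemma fin_coe_sub (x y : Fin m) : (m:ℤ) ∣ (((x:ℤ)-(y:ℤ)) - ((x - y : Fin m):ℤ)) := by
  have h := fin_coe_add (x - y) y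
  simp only [sub_add_cancel] at h
  have e : ((x:ℤ)-(y:ℤ)) - ((x - y : Fin m):ℤ) = -((((x-y : Fin m):ℤ) + y) - x) := by ring
  rw [e]
  exact h.neg_right

lemma dvd_congr' (A B : ℤ) (h : (m:ℤ) ∣ (A - B)) : ((m:ℤ) ∣ A ↔ (m:ℤ) ∣ B) := by
  constructor
  · intro hA
    have := dvd_sub hA h
    simpa using this
  · intro hB
    have := dvd_add h hB
    simpa using this

lemma one_coe (hm : 3 ≤ m) : ((1 : Fin m):ℤ) = 1 := by
  have : ((1 : Fin m):ℕ) = 1 % m := rfl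
  have h2 : 1 % m = 1 := Nat.mod_eq_of_lt (by omega)
  omega

/-- condition lemma: `m ∣ (x - s + t)` iff `x = y`, provided `s - t ≡ y`. -/
lemma cond_gen (x s : Fin m) (t : ℤ) (y : Fin m) (hy : (m:ℤ) ∣ ((s:ℤ) - t - (y:ℤ))) :
    ((m:ℤ) ∣ ((x:ℤ) - (s:ℤ) + t) ↔ x = y) := by
  have h1 : (m:ℤ) ∣ (((x:ℤ) - s + t) - ((x:ℤ) - (y:ℤ))) := by
    have e : ((x:ℤ) - s + t) - ((x:ℤ) - (y:ℤ)) = -(((s:ℤ) - t) - y) := by ring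
    rw [e]
    exact Dvd.dvd.neg_right hy
  rw [dvd_congr' _ _ h1, fin_dvd_iff]

lemma cond_sub1 (hm : 3 ≤ m) (x s : Fin m) : ((m:ℤ) ∣ ((x:ℤ) - (s:ℤ) + 1) ↔ x = s - 1) := by
  refine cond_gen x s 1 (s - 1) ?_
  have h := fin_coe_sub s 1
  rw [one_coe hm] at h
  exact h

lemma cond_zero (x s : Fin m) : ((m:ℤ) ∣ ((x:ℤ) - (s:ℤ)) ↔ x = s) := fin_dvd_iff x s

lemma cond_add1 (hm : 3 ≤ m) (x s : Fin m) : ((m:ℤ) ∣ ((x:ℤ) - (s:ℤ) - 1) ↔ x = s + 1) := by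
  have := cond_gen x s (-1) (s + 1) ?_
  · simpa [sub_eq_add_neg] using this
  · have h := fin_coe_add s 1
    rw [one_coe hm] at h
    have e : (s:ℤ) - (-1) - ((s+1 : Fin m):ℤ) = ((s:ℤ) + 1) - ((s+1 : Fin m):ℤ) := by ring
    rw [e]
    exact h

lemma collapse_gen (H : Fin m → ℂ) (y : Fin m) (h0 : ∀ c, c ≠ y → H c = 0) :
    ∑ c : Fin m, H c = H y :=
  Finset.sum_eq_single y (fun c _ hc => h0 c hc) (by simp)

lemma double_orth (d e : ℤ) :
    ∑ p : Fin m, ∑ q : Fin m, ωc m ^ ((p:ℤ)*d + (q:ℤ)*e)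
      = (if (m:ℤ) ∣ d then (m:ℂ) else 0) * (if (m:ℤ) ∣ e then (m:ℂ) else 0) := by
  rw [← omega_orth d, ← omega_orth e, Finset.sum_mul_sum]
  exact Finset.sum_congr rfl fun p _ => Finset.sum_congr rfl fun q _ =>
    (zpow_add₀ omega_ne_zero _ _)

lemma im_cast_eq (z : ℂ) : ((z.im : ℝ) : ℂ) = (z - (starRingEnd ℂ) z) / (2 * Complex.I) := by
  rw [Complex.sub_conj]
  push_cast
  field_simp

lemma collapse2 (G : Fin m → Fin m → ℂ) (y : Fin m) (φ : Fin m → Fin m) :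
    ∑ b : Fin m, ∑ c : Fin m,
        G b c * ((if c = y then (m:ℂ) else 0) * (if b = φ c then (m:ℂ) else 0))
      = G (φ y) y * ((m:ℂ) * (m:ℂ)) := by
  have hc : ∀ b, (∑ c : Fin m,
      G b c * ((if c = y then (m:ℂ) else 0) * (if b = φ c then (m:ℂ) else 0)))
      = G b y * ((m:ℂ) * (if b = φ y then (m:ℂ) else 0)) := by
    intro b
    rw [collapse_gen (fun c => G b c * ((if c = y then (m:ℂ) else 0) * (if b = φ c then (m:ℂ) else 0))) y
      (fun c hc => by simp [hc])]
    simp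
  rw [Finset.sum_congr rfl (fun b _ => hc b),
    collapse_gen (fun b => G b y * ((m:ℂ) * (if b = φ y then (m:ℂ) else 0))) (φ y)
      (fun b hb => by simp [hb])]
  simp

theorem Z_fourier_expansion (m : ℕ) [NeZero m] (hm : 3 ≤ m) (v : Fin m → ℂ) :
    Zg v = (m : ℂ) * ∑ p : Fin m, ∑ q : Fin m,
      ξg v p * (starRingEnd ℂ) (ξg v q) * ξg v (q - p) *
        (((ωc m ^ (p : ℕ) + ωc m ^ (q : ℕ)).im : ℝ) : ℂ) := by
  classical
  have hm0 : (m:ℂ) ≠ 0 := Nat.cast_ne_zero.mpr (NeZero.ne m)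
  set F : Fin m × Fin m × Fin m → ℂ :=
    fun x => v x.1 * (starRingEnd ℂ) (v x.2.1) * v x.2.2 with hF
  set W : Fin m × Fin m → Fin m × Fin m × Fin m → ℂ := fun pq x =>
      ωc m ^ ((pq.1:ℤ) * ((x.2.2:ℤ) - (x.1:ℤ) + 1) + (pq.2:ℤ) * ((x.2.1:ℤ) - (x.2.2:ℤ)))
      + ωc m ^ ((pq.1:ℤ) * ((x.2.2:ℤ) - (x.1:ℤ)) + (pq.2:ℤ) * ((x.2.1:ℤ) - (x.2.2:ℤ) + 1))
      - ωc m ^ ((pq.1:ℤ) * ((x.2.2:ℤ) - (x.1:ℤ) - 1) + (pq.2:ℤ) * ((x.2.1:ℤ) - (x.2.2:ℤ)))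
      - ωc m ^ ((pq.1:ℤ) * ((x.2.2:ℤ) - (x.1:ℤ)) + (pq.2:ℤ) * ((x.2.1:ℤ) - (x.2.2:ℤ) - 1))
    with hW
  -- Step 1: expand each summand into a triple sum
  have h1 : ∀ p q : Fin m,
      ξg v p * (starRingEnd ℂ) (ξg v q) * ξg v (q - p) *
        (((ωc m ^ (p:ℕ) + ωc m ^ (q:ℕ)).im : ℝ) : ℂ)
      = (1/(m:ℂ))^3 / (2 * Complex.I) *
          ∑ x : Fin m × Fin m × Fin m, F x * W (p, q) x := by
    intro p q
    have hconj : (starRingEnd ℂ) (ξg v q)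
        = 1/(m:ℂ) * ∑ b : Fin m, (starRingEnd ℂ) (v b) * ωc m ^ ((q:ℤ)*(b:ℤ)) := by
      unfold ξg
      rw [map_mul, map_sum]
      congr 1
      · simp
      · refine Finset.sum_congr rfl fun b _ => ?_
        rw [map_mul, conj_omega_zpow, neg_neg]
    have hxi3 : ξg v (q - p)
        = 1/(m:ℂ) * ∑ c : Fin m, v c * ωc m ^ (-(((q:ℤ)-(p:ℤ))*(c:ℤ))) := by
      unfold ξg
      congr 1
      refine Finset.sum_congr rfl fun c _ => ?_
      congr 1
      apply omega_zpow_congr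
      have e : -(((q - p : Fin m):ℤ) * c) - -(((q:ℤ)-(p:ℤ))*(c:ℤ))
          = (((q:ℤ)-(p:ℤ)) - ((q - p : Fin m):ℤ)) * c := by ring
      rw [e]
      exact (fin_coe_sub q p).mul_right _
    have hD : (((ωc m ^ (p:ℕ) + ωc m ^ (q:ℕ)).im : ℝ) : ℂ)
        = (ωc m ^ ((p:ℤ)) + ωc m ^ ((q:ℤ)) - ωc m ^ (-(p:ℤ)) - ωc m ^ (-(q:ℤ)))
            / (2*Complex.I) := by
      rw [im_cast_eq, map_add, ← zpow_natCast (ωc m) (p:ℕ), ← zpow_natCast (ωc m) (q:ℕ),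
        conj_omega_zpow, conj_omega_zpow]
      push_cast
      ring
    have hxi1 : ξg v p = 1/(m:ℂ) * ∑ a : Fin m, v a * ωc m ^ (-((p:ℤ)*(a:ℤ))) := by
      unfold ξg; norm_num
    rw [hxi1, hconj, hxi3, hD]
    rw [show (∑ x : Fin m × Fin m × Fin m, F x * W (p, q) x)
        = ∑ a : Fin m, ∑ b : Fin m, ∑ c : Fin m, F (a, b, c) * W (p, q) (a, b, c) by
      rw [Fintype.sum_prod_type]
      exact Finset.sum_congr rfl fun a _ => Fintype.sum_prod_type _]
    have key : (∑ a : Fin m, v a * ωc m ^ (-((p:ℤ)*(a:ℤ))))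
        * (∑ b : Fin m, (starRingEnd ℂ) (v b) * ωc m ^ ((q:ℤ)*(b:ℤ)))
        * ((∑ c : Fin m, v c * ωc m ^ (-(((q:ℤ)-(p:ℤ))*(c:ℤ))))
          * (ωc m ^ ((p:ℤ)) + ωc m ^ ((q:ℤ)) - ωc m ^ (-(p:ℤ)) - ωc m ^ (-(q:ℤ))))
        = ∑ a : Fin m, ∑ b : Fin m, ∑ c : Fin m, F (a, b, c) * W (p, q) (a, b, c) := by
      rw [Finset.sum_mul_sum, Finset.sum_mul]
      refine Finset.sum_congr rfl fun a _ => ?_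
      rw [Finset.sum_mul]
      refine Finset.sum_congr rfl fun b _ => ?_
      rw [Finset.sum_mul, Finset.mul_sum]
      refine Finset.sum_congr rfl fun c _ => ?_
      have comb : ∀ (u t : ℤ),
          (-((p:ℤ)*(a:ℤ)) + (q:ℤ)*(b:ℤ) + -(((q:ℤ)-(p:ℤ))*(c:ℤ)) + u = t) →
          ωc m ^ (-((p:ℤ)*(a:ℤ))) * ωc m ^ ((q:ℤ)*(b:ℤ))
            * ωc m ^ (-(((q:ℤ)-(p:ℤ))*(c:ℤ))) * ωc m ^ u = ωc m ^ t := by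
        intro u t ht
        rw [← zpow_add₀ omega_ne_zero, ← zpow_add₀ omega_ne_zero,
          ← zpow_add₀ omega_ne_zero, ht]
      have e1 := comb ((p:ℤ)) ((p:ℤ) * ((c:ℤ) - (a:ℤ) + 1) + (q:ℤ) * ((b:ℤ) - (c:ℤ))) (by ring)
      have e2 := comb ((q:ℤ)) ((p:ℤ) * ((c:ℤ) - (a:ℤ)) + (q:ℤ) * ((b:ℤ) - (c:ℤ) + 1)) (by ring)
      have e3 := comb (-(p:ℤ)) ((p:ℤ) * ((c:ℤ) - (a:ℤ) - 1) + (q:ℤ) * ((b:ℤ) - (c:ℤ))) (by ring)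
      have e4 := comb (-(q:ℤ)) ((p:ℤ) * ((c:ℤ) - (a:ℤ)) + (q:ℤ) * ((b:ℤ) - (c:ℤ) - 1)) (by ring)
      simp only [hF, hW]
      linear_combination (v a * (starRingEnd ℂ) (v b) * v c) * (e1 + e2 - e3 - e4)
    rw [← key]
    ring
  -- Step 2: sum of W over (p,q)
  have hWsum : ∀ x : Fin m × Fin m × Fin m, (∑ pq : Fin m × Fin m, W pq x)
      = (if x.2.2 = x.1 - 1 then (m:ℂ) else 0) * (if x.2.1 = x.2.2 then (m:ℂ) else 0)
      + (if x.2.2 = x.1 then (m:ℂ) else 0) * (if x.2.1 = x.2.2 - 1 then (m:ℂ) else 0)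
      - (if x.2.2 = x.1 + 1 then (m:ℂ) else 0) * (if x.2.1 = x.2.2 then (m:ℂ) else 0)
      - (if x.2.2 = x.1 then (m:ℂ) else 0) * (if x.2.1 = x.2.2 + 1 then (m:ℂ) else 0) := by
    intro x
    obtain ⟨a, b, c⟩ := x
    rw [show (∑ pq : Fin m × Fin m, W pq (a, b, c))
        = ∑ p : Fin m, ∑ q : Fin m, W (p, q) (a, b, c) from Fintype.sum_prod_type _]
    simp only [hW]
    simp only [Finset.sum_add_distrib, Finset.sum_sub_distrib]
    rw [double_orth, double_orth, double_orth, double_orth]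
    simp only [cond_sub1 hm, cond_zero, cond_add1 hm]
  -- LHS rewrite
  have hZ : Zg v = 1/(2*Complex.I) * ∑ k : Fin m,
      (v k + v (k+1)) * ((starRingEnd ℂ) (v k) * v (k+1) - v k * (starRingEnd ℂ) (v (k+1))) := by
    unfold Zg
    rw [Finset.mul_sum]
    refine Finset.sum_congr rfl fun k _ => ?_
    rw [im_cast_eq, map_mul, Complex.conj_conj]
    ring
  set S : Fin m × Fin m → ℂ := fun pq =>
    ξg v pq.1 * (starRingEnd ℂ) (ξg v pq.2) * ξg v (pq.2 - pq.1) *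
      (((ωc m ^ ((pq.1 : Fin m):ℕ) + ωc m ^ ((pq.2 : Fin m):ℕ)).im : ℝ):ℂ) with hS
  have e0 : (∑ p : Fin m, ∑ q : Fin m,
      ξg v p * (starRingEnd ℂ) (ξg v q) * ξg v (q - p) *
        (((ωc m ^ (p:ℕ) + ωc m ^ (q:ℕ)).im : ℝ) : ℂ)) = ∑ pq : Fin m × Fin m, S pq :=
    (Fintype.sum_prod_type S).symm
  have e1 : (∑ pq : Fin m × Fin m, S pq)
      = ∑ pq : Fin m × Fin m, (1/(m:ℂ))^3 / (2 * Complex.I) *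
          ∑ x : Fin m × Fin m × Fin m, F x * W pq x :=
    Finset.sum_congr rfl fun pq _ => h1 pq.1 pq.2
  have e2 : (∑ pq : Fin m × Fin m, (1/(m:ℂ))^3 / (2 * Complex.I) *
        ∑ x : Fin m × Fin m × Fin m, F x * W pq x)
      = (1/(m:ℂ))^3 / (2 * Complex.I) *
        ∑ x : Fin m × Fin m × Fin m, F x * ∑ pq : Fin m × Fin m, W pq x := by
    rw [← Finset.mul_sum, Finset.sum_comm]
    congr 1
    refine Finset.sum_congr rfl fun x _ => ?_
    rw [← Finset.mul_sum]
  have e3 : (∑ x : Fin m × Fin m × Fin m, F x * ∑ pq : Fin m × Fin m, W pq x)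
      = ∑ a : Fin m, ∑ b : Fin m, ∑ c : Fin m, F (a, b, c) *
          ((if c = a - 1 then (m:ℂ) else 0) * (if b = c then (m:ℂ) else 0)
          + (if c = a then (m:ℂ) else 0) * (if b = c - 1 then (m:ℂ) else 0)
          - (if c = a + 1 then (m:ℂ) else 0) * (if b = c then (m:ℂ) else 0)
          - (if c = a then (m:ℂ) else 0) * (if b = c + 1 then (m:ℂ) else 0)) := by
    simp only [hWsum]
    rw [Fintype.sum_prod_type]
    refine Finset.sum_congr rfl fun a _ => ?_
    rw [Fintype.sum_prod_type]
  have e4 : (∑ a : Fin m, ∑ b : Fin m, ∑ c : Fin m, F (a, b, c) *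
          ((if c = a - 1 then (m:ℂ) else 0) * (if b = c then (m:ℂ) else 0)
          + (if c = a then (m:ℂ) else 0) * (if b = c - 1 then (m:ℂ) else 0)
          - (if c = a + 1 then (m:ℂ) else 0) * (if b = c then (m:ℂ) else 0)
          - (if c = a then (m:ℂ) else 0) * (if b = c + 1 then (m:ℂ) else 0)))
      = ∑ a : Fin m, (F (a, a-1, a-1) + F (a, a-1, a) - F (a, a+1, a+1) - F (a, a+1, a))
          * ((m:ℂ) * (m:ℂ)) := by
    refine Finset.sum_congr rfl fun a _ => ?_
    have t1 := collapse2 (m := m) (fun b c => F (a, b, c)) (a - 1) (fun c => c)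
    have t2 := collapse2 (m := m) (fun b c => F (a, b, c)) a (fun c => c - 1)
    have t3 := collapse2 (m := m) (fun b c => F (a, b, c)) (a + 1) (fun c => c)
    have t4 := collapse2 (m := m) (fun b c => F (a, b, c)) a (fun c => c + 1)
    simp only [mul_add, mul_sub, Finset.sum_add_distrib, Finset.sum_sub_distrib]
    rw [t1, t2, t3, t4]
    ring
  have hshift : ∀ G : Fin m → ℂ, ∑ a : Fin m, G a = ∑ k : Fin m, G (k + 1) := by
    intro G
    exact Fintype.sum_equiv (Equiv.addRight (1 : Fin m)) _ _ (fun k => rfl) |>.symm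
  have e5 : (∑ a : Fin m, (F (a, a-1, a-1) + F (a, a-1, a) - F (a, a+1, a+1) - F (a, a+1, a))
          * ((m:ℂ) * (m:ℂ)))
      = ∑ k : Fin m, ((v k + v (k+1)) *
          ((starRingEnd ℂ) (v k) * v (k+1) - v k * (starRingEnd ℂ) (v (k+1)))) * ((m:ℂ) * (m:ℂ)) := by
    have split : ∀ a : Fin m,
        (F (a, a-1, a-1) + F (a, a-1, a) - F (a, a+1, a+1) - F (a, a+1, a)) * ((m:ℂ) * (m:ℂ))
        = (F (a, a-1, a-1) + F (a, a-1, a)) * ((m:ℂ) * (m:ℂ))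
          - (F (a, a+1, a+1) + F (a, a+1, a)) * ((m:ℂ) * (m:ℂ)) := fun a => by ring
    simp only [split]
    rw [Finset.sum_sub_distrib,
      hshift (fun a => (F (a, a-1, a-1) + F (a, a-1, a)) * ((m:ℂ) * (m:ℂ))),
      ← Finset.sum_sub_distrib]
    refine Finset.sum_congr rfl fun k _ => ?_
    have hk : (k + 1 : Fin m) - 1 = k := by
      simp
    rw [hk]
    simp only [hF]
    ring
  rw [hZ, e0, e1, e2, e3, e4, e5, ← Finset.sum_mul]
  field_simp
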